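/- arXiv:2105.07577 — 3 statements merged into one kernel-verified Lean document; each statement's English description precedes it below -/
import Mathlib

section
/- Let κ > 0 and E > 0. Let p : ℝ → ℝ satisfy p''(t) + sin p(t) = 0 with (p'(t))²/2 = E + 1 + cos p(t) and p(0) = 0, p'(0) > 0, so that p(t + T(E)) = p(t) + 2π with T(E) = (1/√2)∫_{−π}^{π} dx/√(E + 1 + cos x). Let F_E = X(T(E)) be the Floquet matrix of the linearization w'' + (2κ + cos p(t))w = 0, where X is the fundamental matrix solution of the associated first-order system with X(0) = I. Then the synchronous solution is linearly unstable, i.e. |tr F_E| > 2 (equivalently F_E has a real eigenvalue of absolute value greater than 1), if and only if 4κ − 2 < E < 4κ. For all other E > 0 the eigenvalues of F_E lie on the unit circle (|tr F_E| ≤ 2). -/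
/-!
The monodromy `X T` preserves the quadratic form `2κ(E - 4κ) x² + (E + 2 - 4κ) y²`: this is the
value at `p ∈ 2πℤ` of a first integral of the linearization. When the form is semidefinite,
`|tr X T| ≤ 2`. When it is indefinite, which happens exactly for `4κ - 2 < E < 4κ`, a
determinant-one matrix preserving it has `|tr| > 2` unless it is `±1`. Sturm comparison rules
out both exceptions, because `sin (p / 2)` and `cos (p / 2)` solve the same equation with `2κ`
replaced by `(E + 2) / 2` and `E / 2`. If `X T = 1`, some solution vanishes at `0` and at `T`.
If `X T = -1`, some solution vanishes where `p = π` and where `p = 3π`. Either way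
`sin (p / 2)` would need more zeros than it has.
-/

open Real

attribute [local instance] Matrix.frobeniusNormedAddCommGroup Matrix.frobeniusNormedSpace
  Matrix.frobeniusNormedRing

open Set

theorem IsPreconnected.pos_or_neg_of_ne_zero {α : Type*} [TopologicalSpace α] {S : Set α}
    {f : α → ℝ} (hS : IsPreconnected S) (hf : ContinuousOn f S) (h : ∀ x ∈ S, f x ≠ 0) :
    (∀ x ∈ S, 0 < f x) ∨ (∀ x ∈ S, f x < 0) := by
  by_contra! hsign
  obtain ⟨⟨x, hx, hfx⟩, ⟨y, hy, hfy⟩⟩ := hsign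
  obtain ⟨z, hz, hfz⟩ := hS.intermediate_value hx hy hf ⟨hfx, hfy⟩
  exact h z hz hfz

theorem exists_first_zero_of_hasDerivAt {f : ℝ → ℝ} {f' a b : ℝ} (hf : Continuous f)
    (hab : a < b) (hb : f b = 0) (hfa : HasDerivAt f f' a) (hf' : f' ≠ 0) :
    ∃ c ∈ Ioc a b, f c = 0 ∧ ∀ t ∈ Ioo a c, f t ≠ 0 := by
  obtain ⟨u, hau, hu⟩ := mem_nhdsGT_iff_exists_Ioo_subset.1
    (nhdsWithin_mono a (fun _ => ne_of_gt) (hfa.eventually_ne (c := 0) hf'))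
  have hau : a < u := hau
  set a' := min ((a + u) / 2) b
  have ha' : a < a' := lt_min (by linarith) hab
  set K := Icc a' b ∩ f ⁻¹' {0}
  have hK : IsCompact K := isCompact_Icc.inter_right (isClosed_singleton.preimage hf)
  have hbK : b ∈ K := ⟨⟨min_le_right _ _, le_rfl⟩, hb⟩
  have hcK := hK.sInf_mem ⟨b, hbK⟩
  refine ⟨sInf K, ⟨ha'.trans_le hcK.1.1, hcK.1.2⟩, hcK.2, fun t ht hft => ?_⟩
  rcases lt_or_ge t a' with hta' | hta'
  · exact hu ⟨ht.1, hta'.trans ((min_le_left _ _).trans_lt (by linarith))⟩ hft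
  · exact (csInf_le hK.bddBelow ⟨⟨hta', ht.2.le.trans hcK.1.2⟩, hft⟩).not_gt ht.2

theorem HasDerivAt.nonneg_of_pos_right {f : ℝ → ℝ} {f' a b : ℝ} (hf : HasDerivAt f f' a)
    (ha : f a = 0) (hab : a < b) (h : ∀ t ∈ Ioo a b, 0 < f t) : 0 ≤ f' := by
  refine ge_of_tendsto ((hasDerivAt_iff_tendsto_slope.1 hf).mono_left (nhdsGT_le_nhdsNE a)) ?_
  filter_upwards [Ioo_mem_nhdsGT hab] with t ht
  rw [slope_def_field, ha, sub_zero]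
  exact (div_pos (h t ht) (sub_pos.2 ht.1)).le

theorem HasDerivAt.nonpos_of_pos_left {f : ℝ → ℝ} {f' a b : ℝ} (hf : HasDerivAt f f' b)
    (hb : f b = 0) (hab : a < b) (h : ∀ t ∈ Ioo a b, 0 < f t) : f' ≤ 0 := by
  refine le_of_tendsto ((hasDerivAt_iff_tendsto_slope.1 hf).mono_left (nhdsLT_le_nhdsNE b)) ?_
  filter_upwards [Ioo_mem_nhdsLT hab] with t ht
  rw [slope_def_field, hb, sub_zero]
  exact (div_neg_of_pos_of_neg (h t ht) (sub_neg.2 ht.2)).le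

theorem Continuous.nonneg_of_pos_on_Ioo {f : ℝ → ℝ} {a b : ℝ} (hf : Continuous f) (hab : a < b)
    (h : ∀ t ∈ Ioo a b, 0 < f t) : ∀ t ∈ Icc a b, 0 ≤ f t := by
  rw [← closure_Ioo hab.ne]
  exact closure_minimal (fun t ht => (h t ht).le) (isClosed_le continuous_const hf)

def Matrix.PreservesDiagForm (c₁ c₂ : ℝ) (M : Matrix (Fin 2) (Fin 2) ℝ) : Prop :=
  ∀ x y : ℝ, c₁ * (M 0 0 * x + M 0 1 * y) ^ 2 + c₂ * (M 1 0 * x + M 1 1 * y) ^ 2 =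
    c₁ * x ^ 2 + c₂ * y ^ 2

namespace Matrix.PreservesDiagForm

variable {c₁ c₂ : ℝ} {M : Matrix (Fin 2) (Fin 2) ℝ}

/-- With `Q = diag(c₁, c₂)`, the identity `Mᵀ Q M = Q` and `det M = 1` give `Q M = M⁻ᵀ Q`,
whose entries are the three equations below. -/
theorem coeff_eqs (hM : M.PreservesDiagForm c₁ c₂) (hdet : M.det = 1) :
    c₁ * (M 0 0 - M 1 1) = 0 ∧ c₂ * (M 0 0 - M 1 1) = 0 ∧ c₁ * M 0 1 + c₂ * M 1 0 = 0 := by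
  rw [det_fin_two] at hdet
  have h₁ := hM 1 0
  have h₂ := hM 0 1
  have h₁₂ := hM 1 1
  refine ⟨?_, ?_, ?_⟩
  · linear_combination M 1 1 * h₁ - M 1 0 * (h₁₂ - h₁ - h₂) / 2 - c₁ * M 0 0 * hdet
  · linear_combination -M 0 0 * h₂ + M 0 1 * (h₁₂ - h₁ - h₂) / 2 + c₂ * M 1 1 * hdet
  · linear_combination M 1 1 * (h₁₂ - h₁ - h₂) / 2 - M 1 0 * h₂ - c₁ * M 0 1 * hdet

theorem abs_trace_le_two (hM : M.PreservesDiagForm c₁ c₂) (hdet : M.det = 1)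
    (hc : 0 ≤ c₁ * c₂) (hne : c₁ ≠ 0 ∨ c₂ ≠ 0) : |M.trace| ≤ 2 := by
  obtain ⟨h₁, h₂, h₁₂⟩ := hM.coeff_eqs hdet
  have hdiag : M 0 0 = M 1 1 := by
    rcases hne with hne | hne
    · exact sub_eq_zero.1 ((mul_eq_zero.1 h₁).resolve_left hne)
    · exact sub_eq_zero.1 ((mul_eq_zero.1 h₂).resolve_left hne)
  have hoff : M 0 1 * M 1 0 ≤ 0 := by
    rcases hne with hne | hne
    · have : c₁ ^ 2 * (M 0 1 * M 1 0) = -(c₁ * c₂) * M 1 0 ^ 2 := by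
        linear_combination M 1 0 * c₁ * h₁₂
      nlinarith [sq_pos_of_ne_zero hne, sq_nonneg (M 1 0)]
    · have : c₂ ^ 2 * (M 0 1 * M 1 0) = -(c₁ * c₂) * M 0 1 ^ 2 := by
        linear_combination M 0 1 * c₂ * h₁₂
      nlinarith [sq_pos_of_ne_zero hne, sq_nonneg (M 0 1)]
  rw [det_fin_two] at hdet
  rw [trace_fin_two]
  simpa using sq_le_sq.1 (show (M 0 0 + M 1 1) ^ 2 ≤ 2 ^ 2 by nlinarith)

theorem two_lt_abs_trace_or (hM : M.PreservesDiagForm c₁ c₂) (hdet : M.det = 1)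
    (hc : c₁ * c₂ < 0) : 2 < |M.trace| ∨ M = 1 ∨ M = -1 := by
  obtain ⟨h₁, -, h₁₂⟩ := hM.coeff_eqs hdet
  have hc₁ : c₁ ≠ 0 := by rintro rfl; simp at hc
  have hdiag : M 0 0 = M 1 1 := sub_eq_zero.1 ((mul_eq_zero.1 h₁).resolve_left hc₁)
  have hoff : c₁ ^ 2 * (M 0 1 * M 1 0) = -(c₁ * c₂) * M 1 0 ^ 2 := by
    linear_combination M 1 0 * c₁ * h₁₂
  rw [det_fin_two] at hdet
  rcases (show 0 ≤ M 0 1 * M 1 0 by nlinarith [sq_pos_of_ne_zero hc₁, sq_nonneg (M 1 0)]).lt_or_eq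
    with hpos | hzero
  · left
    rw [trace_fin_two]
    simpa using sq_lt_sq.1 (show 2 ^ 2 < (M 0 0 + M 1 1) ^ 2 by nlinarith)
  · right
    have hM₀₁ : M 0 1 = 0 := by
      have : c₁ * M 0 1 ^ 2 = 0 := by linear_combination M 0 1 * h₁₂ + c₂ * hzero
      exact pow_eq_zero_iff two_ne_zero |>.1 ((mul_eq_zero.1 this).resolve_left hc₁)
    have hM₁₀ : M 1 0 = 0 := by
      have hc₂ : c₂ ≠ 0 := by rintro rfl; simp at hc
      rw [hM₀₁, mul_zero, zero_add] at h₁₂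
      exact (mul_eq_zero.1 h₁₂).resolve_left hc₂
    have hsq : (M 0 0 - 1) * (M 0 0 + 1) = 0 := by
      linear_combination hdet + M 0 0 * hdiag - hzero
    rcases mul_eq_zero.1 hsq with h | h
    · left
      ext i j
      fin_cases i <;> fin_cases j <;> simp [hM₀₁, hM₁₀, ← hdiag] <;> linarith
    · right
      ext i j
      fin_cases i <;> fin_cases j <;> simp [hM₀₁, hM₁₀, ← hdiag] <;> linarith

end Matrix.PreservesDiagForm

def IsHillSolution (q w v : ℝ → ℝ) : Prop :=
  ∀ t, HasDerivAt w (v t) t ∧ HasDerivAt v (-q t * w t) t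

namespace IsHillSolution

variable {q q₁ q₂ w w₁ w₂ v v₁ v₂ : ℝ → ℝ}

theorem continuous (h : IsHillSolution q w v) : Continuous w :=
  continuous_iff_continuousAt.2 fun t => (h t).1.continuousAt

theorem neg (h : IsHillSolution q w v) : IsHillSolution q (fun t => -w t) (fun t => -v t) :=
  fun t => ⟨(h t).1.neg, (h t).2.neg.congr_deriv (by ring)⟩

theorem mul_const (h : IsHillSolution q w v) (c : ℝ) :
    IsHillSolution q (fun t => w t * c) (fun t => v t * c) :=
  fun t => ⟨(h t).1.mul_const c, ((h t).2.mul_const c).congr_deriv (by ring)⟩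

theorem add (h₁ : IsHillSolution q w₁ v₁) (h₂ : IsHillSolution q w₂ v₂) :
    IsHillSolution q (fun t => w₁ t + w₂ t) (fun t => v₁ t + v₂ t) :=
  fun t => ⟨(h₁ t).1.add (h₂ t).1, ((h₁ t).2.add (h₂ t).2).congr_deriv (by ring)⟩

theorem sub (h₁ : IsHillSolution q w₁ v₁) (h₂ : IsHillSolution q w₂ v₂) :
    IsHillSolution q (fun t => w₁ t - w₂ t) (fun t => v₁ t - v₂ t) :=
  fun t => ⟨(h₁ t).1.sub (h₂ t).1, ((h₁ t).2.sub (h₂ t).2).congr_deriv (by ring)⟩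

theorem comp_add_const (h : IsHillSolution q w v) {T : ℝ} (hq : ∀ t, q (t + T) = q t) :
    IsHillSolution q (fun t => w (t + T)) (fun t => v (t + T)) := fun t =>
  ⟨(h (t + T)).1.comp_add_const t T, by simpa [hq] using (h (t + T)).2.comp_add_const t T⟩

theorem hasDerivAt_wronskian (h₁ : IsHillSolution q₁ w₁ v₁) (h₂ : IsHillSolution q₂ w₂ v₂)
    (t : ℝ) : HasDerivAt (fun s => w₁ s * v₂ s - v₁ s * w₂ s)
      ((q₁ t - q₂ t) * w₁ t * w₂ t) t :=
  (((h₁ t).1.mul (h₂ t).2).sub ((h₁ t).2.mul (h₂ t).1)).congr_deriv (by ring)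

theorem wronskian_eq (h₁ : IsHillSolution q w₁ v₁) (h₂ : IsHillSolution q w₂ v₂) (s t : ℝ) :
    w₁ s * v₂ s - v₁ s * w₂ s = w₁ t * v₂ t - v₁ t * w₂ t := by
  have hW := h₁.hasDerivAt_wronskian h₂
  simp only [sub_self, zero_mul] at hW
  exact is_const_of_deriv_eq_zero (fun t => (hW t).differentiableAt) (fun t => (hW t).deriv) s t

/-- Cauchy uniqueness, read off from a fundamental pair: the Wronskians of `u` with `w₁` and
`w₂` vanish identically, and they determine `(u, u')` at every time. -/
theorem eq_zero_of_initial_eq_zero (h₁ : IsHillSolution q w₁ v₁) (h₂ : IsHillSolution q w₂ v₂)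
    {s : ℝ} (hW : w₁ s * v₂ s - v₁ s * w₂ s ≠ 0) {u u' : ℝ → ℝ} (hu : IsHillSolution q u u')
    {t₀ : ℝ} (h₀ : u t₀ = 0) (h₀' : u' t₀ = 0) (t : ℝ) : u t = 0 ∧ u' t = 0 := by
  have hW' : w₁ t * v₂ t - v₁ t * w₂ t ≠ 0 := by rwa [h₁.wronskian_eq h₂ t s]
  have e₁ := hu.wronskian_eq h₁ t t₀
  have e₂ := hu.wronskian_eq h₂ t t₀
  simp only [h₀, h₀', zero_mul, sub_zero] at e₁ e₂
  constructor
  · refine (mul_eq_zero.1 ?_).resolve_right hW'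
    linear_combination w₁ t * e₂ - w₂ t * e₁
  · refine (mul_eq_zero.1 ?_).resolve_right hW'
    linear_combination v₁ t * e₂ - v₂ t * e₁

/-- The Wronskian `w₁ v₂ - v₁ w₂` decreases strictly on `[a, b]`, yet the signs of `w₁, w₂`
force it to be `≤ 0` at `a` and `≥ 0` at `b`. -/
theorem sturm_of_pos (h₁ : IsHillSolution q₁ w₁ v₁) (h₂ : IsHillSolution q₂ w₂ v₂) {a b : ℝ}
    (hab : a < b) (hq : ∀ t ∈ Ioo a b, q₁ t < q₂ t) (ha : w₁ a = 0) (hb : w₁ b = 0)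
    (hw₁ : ∀ t ∈ Ioo a b, 0 < w₁ t) (hw₂ : ∀ t ∈ Ioo a b, 0 < w₂ t) : False := by
  have hW := h₁.hasDerivAt_wronskian h₂
  have hanti : StrictAntiOn (fun s => w₁ s * v₂ s - v₁ s * w₂ s) (Icc a b) := by
    refine strictAntiOn_of_deriv_neg (convex_Icc a b)
      (fun t _ => (hW t).continuousAt.continuousWithinAt) fun t ht => ?_
    rw [interior_Icc] at ht
    rw [(hW t).deriv]
    exact mul_neg_of_neg_of_pos (mul_neg_of_neg_of_pos (sub_neg.2 (hq t ht)) (hw₁ t ht))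
      (hw₂ t ht)
  have hlt := hanti (left_mem_Icc.2 hab.le) (right_mem_Icc.2 hab.le) hab
  have hv₁a := (h₁ a).1.nonneg_of_pos_right ha hab hw₁
  have hv₁b := (h₁ b).1.nonpos_of_pos_left hb hab hw₁
  have hw₂a := h₂.continuous.nonneg_of_pos_on_Ioo hab hw₂ a (left_mem_Icc.2 hab.le)
  have hw₂b := h₂.continuous.nonneg_of_pos_on_Ioo hab hw₂ b (right_mem_Icc.2 hab.le)
  simp only [ha, hb, zero_mul, zero_sub] at hlt
  nlinarith [mul_nonneg hv₁a hw₂a, mul_nonneg (neg_nonneg.2 hv₁b) hw₂b]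

theorem sturm_comparison (h₁ : IsHillSolution q₁ w₁ v₁) (h₂ : IsHillSolution q₂ w₂ v₂)
    {a b : ℝ} (hab : a < b) (hq : ∀ t ∈ Ioo a b, q₁ t < q₂ t) (ha : w₁ a = 0) (hva : v₁ a ≠ 0)
    (hb : w₁ b = 0) : ∃ σ ∈ Ioo a b, w₂ σ = 0 := by
  by_contra! hw₂
  obtain ⟨c, hc, hwc, hw₁⟩ :=
    exists_first_zero_of_hasDerivAt h₁.continuous hab hb (h₁ a).1 hva
  have hac : Ioo a c ⊆ Ioo a b := Ioo_subset_Ioo_right hc.2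
  have hq' : ∀ t ∈ Ioo a c, q₁ t < q₂ t := fun t ht => hq t (hac ht)
  rcases isPreconnected_Ioo.pos_or_neg_of_ne_zero h₁.continuous.continuousOn hw₁
    with hs₁ | hs₁ <;>
  rcases isPreconnected_Ioo.pos_or_neg_of_ne_zero h₂.continuous.continuousOn
    (fun t ht => hw₂ t (hac ht)) with hs₂ | hs₂
  · exact h₁.sturm_of_pos h₂ hc.1 hq' ha hwc hs₁ hs₂
  · exact h₁.sturm_of_pos h₂.neg hc.1 hq' ha hwc hs₁ fun t ht => neg_pos.2 (hs₂ t ht)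
  · exact h₁.neg.sturm_of_pos h₂ hc.1 hq' (neg_eq_zero.2 ha) (neg_eq_zero.2 hwc)
      (fun t ht => neg_pos.2 (hs₁ t ht)) hs₂
  · exact h₁.neg.sturm_of_pos h₂.neg hc.1 hq' (neg_eq_zero.2 ha) (neg_eq_zero.2 hwc)
      (fun t ht => neg_pos.2 (hs₁ t ht)) fun t ht => neg_pos.2 (hs₂ t ht)

end IsHillSolution

theorem isHillSolution_column {q : ℝ → ℝ} {X : ℝ → Matrix (Fin 2) (Fin 2) ℝ}
    (hX : ∀ t, HasDerivAt X (!![0, 1; -q t, 0] * X t) t) (j : Fin 2) :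
    IsHillSolution q (fun t => X t 0 j) (fun t => X t 1 j) := by
  have hentry (i : Fin 2) (t : ℝ) : HasDerivAt (fun s => X s i j)
      ((!![0, 1; -q t, 0] * X t) i j) t :=
    (Matrix.entryLinearMap ℝ ℝ i j).toContinuousLinearMap.hasFDerivAt.comp_hasDerivAt t (hX t)
  intro t
  constructor
  · simpa [Matrix.mul_apply, Fin.sum_univ_two] using hentry 0 t
  · simpa [Matrix.mul_apply, Fin.sum_univ_two] using hentry 1 t

theorem det_fundamental_eq_one {q : ℝ → ℝ} {X : ℝ → Matrix (Fin 2) (Fin 2) ℝ}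
    (hX : ∀ t, HasDerivAt X (!![0, 1; -q t, 0] * X t) t) (hX0 : X 0 = 1) (t : ℝ) :
    (X t).det = 1 := by
  have hW := (isHillSolution_column hX 0).wronskian_eq
    (isHillSolution_column hX 1) t 0
  simp only [hX0, Matrix.one_apply_eq, Matrix.one_apply_ne zero_ne_one,
    Matrix.one_apply_ne one_ne_zero] at hW
  rw [Matrix.det_fin_two]
  linear_combination hW

theorem fundamental_add_period {q : ℝ → ℝ} {X : ℝ → Matrix (Fin 2) (Fin 2) ℝ}
    (hX : ∀ t, HasDerivAt X (!![0, 1; -q t, 0] * X t) t) (hX0 : X 0 = 1) {T : ℝ}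
    (hq : ∀ t, q (t + T) = q t) (t : ℝ) : X (t + T) = X t * X T := by
  have hcol := isHillSolution_column hX
  have hW : X 0 0 0 * X 0 1 1 - X 0 1 0 * X 0 0 1 ≠ 0 := by simp [hX0]
  ext i j
  have hdiff := ((hcol j).comp_add_const hq).sub (((hcol 0).mul_const (X T 0 j)).add
    ((hcol 1).mul_const (X T 1 j)))
  have h := (hcol 0).eq_zero_of_initial_eq_zero (hcol 1) hW hdiff (t₀ := 0) (by simp [hX0])
    (by simp [hX0]) t
  fin_cases i <;> simp [Matrix.mul_apply, Fin.sum_univ_two] <;> linarith [h.1, h.2]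

theorem eq_two_pi_of_sin_half_eq_zero {x : ℝ} (h₁ : π < x) (h₂ : x < 3 * π)
    (h : sin (x / 2) = 0) : x = 2 * π := by
  have hsin : sin (x / 2 - π) = 0 := by rw [sin_sub_pi, h, neg_zero]
  have := (sin_eq_zero_iff_of_lt_of_lt (by linarith) (by linarith)).1 hsin
  linarith

structure IsPendulumSolution (E : ℝ) (p : ℝ → ℝ) : Prop where
  differentiableAt : ∀ t, DifferentiableAt ℝ p t
  hasDerivAt_deriv : ∀ t, HasDerivAt (deriv p) (-sin (p t)) t
  energy : ∀ t, deriv p t ^ 2 / 2 = E + 1 + cos (p t)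

/-- The quadratic form `α v² - α' w v + (q α + α''/2) w²` with `q = 2κ + cos p`,
`α = E + 1 - 4κ + cos p` and `(θ, ω) = (p, p')`. It is a first integral of
`w'' + q w = 0` because `α` solves the equation `α''' + 4 q α' + 2 q' α = 0` satisfied by
products of its solutions. -/
noncomputable def linearizationInvariant (κ E θ ω w v : ℝ) : ℝ :=
  (E + 1 - 4 * κ + cos θ) * v ^ 2 + sin θ * ω * w * v +
    ((2 * κ + cos θ) * (E + 1 - 4 * κ + cos θ) +
      (sin θ ^ 2 - 2 * cos θ * (E + 1 + cos θ)) / 2) * w ^ 2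

theorem linearizationInvariant_of_cos_eq_one {κ E θ : ℝ} (hθ : cos θ = 1) (ω w v : ℝ) :
    linearizationInvariant κ E θ ω w v =
      2 * κ * (E - 4 * κ) * w ^ 2 + (E + 2 - 4 * κ) * v ^ 2 := by
  have hsin : sin θ = 0 := pow_eq_zero_iff two_ne_zero |>.1 (by nlinarith [sin_sq_add_cos_sq θ])
  simp only [linearizationInvariant, hθ, hsin]
  ring

namespace IsPendulumSolution

variable {E κ T : ℝ} {p w v : ℝ → ℝ} {X : ℝ → Matrix (Fin 2) (Fin 2) ℝ}

theorem hasDerivAt (hp : IsPendulumSolution E p) (t : ℝ) : HasDerivAt p (deriv p t) t :=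
  (hp.differentiableAt t).hasDerivAt

theorem deriv_pos (hp : IsPendulumSolution E p) (hE : 0 < E) (h0 : 0 < deriv p 0) (t : ℝ) :
    0 < deriv p t := by
  have hne : ∀ t ∈ univ, deriv p t ≠ 0 := fun t _ h => by
    have := hp.energy t
    rw [h] at this
    nlinarith [neg_one_le_cos (p t)]
  have hcont : Continuous (deriv p) :=
    continuous_iff_continuousAt.2 fun t => (hp.hasDerivAt_deriv t).continuousAt
  rcases isPreconnected_univ.pos_or_neg_of_ne_zero hcont.continuousOn hne with h | h
  · exact h t trivial
  · exact absurd (h 0 trivial) h0.not_gt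

theorem strictMono (hp : IsPendulumSolution E p) (hE : 0 < E) (h0 : 0 < deriv p 0) :
    StrictMono p :=
  strictMono_of_deriv_pos (hp.deriv_pos hE h0)

theorem isHillSolution_sin_half (hp : IsPendulumSolution E p) :
    IsHillSolution (fun t => (E + 2) / 2 + cos (p t)) (fun t => sin (p t / 2))
      (fun t => cos (p t / 2) * (deriv p t / 2)) := by
  intro t
  have hhalf := (hp.hasDerivAt t).div_const 2
  refine ⟨hhalf.sin, (hhalf.cos.mul ((hp.hasDerivAt_deriv t).div_const 2)).congr_deriv ?_⟩
  have hsin : sin (p t) = 2 * sin (p t / 2) * cos (p t / 2) := by rw [← sin_two_mul]; ring_nf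
  have hcos : cos (p t) = 2 * cos (p t / 2) ^ 2 - 1 := by rw [← cos_two_mul]; ring_nf
  linear_combination (-sin (p t / 2) / 2) * hp.energy t - (cos (p t / 2) / 2) * hsin
    + (sin (p t / 2) / 2) * hcos

theorem isHillSolution_cos_half (hp : IsPendulumSolution E p) :
    IsHillSolution (fun t => E / 2 + cos (p t)) (fun t => cos (p t / 2))
      (fun t => -sin (p t / 2) * (deriv p t / 2)) := by
  intro t
  have hhalf := (hp.hasDerivAt t).div_const 2
  refine ⟨hhalf.cos, (hhalf.sin.fun_neg.mul ((hp.hasDerivAt_deriv t).div_const 2)).congr_deriv ?_⟩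
  have hsin : sin (p t) = 2 * sin (p t / 2) * cos (p t / 2) := by rw [← sin_two_mul]; ring_nf
  have hcos : cos (p t) = 2 * cos (p t / 2) ^ 2 - 1 := by rw [← cos_two_mul]; ring_nf
  linear_combination (-cos (p t / 2) / 2) * hp.energy t + (sin (p t / 2) / 2) * hsin
    + (cos (p t / 2) / 2) * hcos + cos (p t / 2) * sin_sq_add_cos_sq (p t / 2)

theorem hasDerivAt_linearizationInvariant (hp : IsPendulumSolution E p)
    (hw : IsHillSolution (fun t => 2 * κ + cos (p t)) w v) (t : ℝ) :
    HasDerivAt (fun t => linearizationInvariant κ E (p t) (deriv p t) (w t) (v t)) 0 t := by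
  have hcos := (hp.hasDerivAt t).cos
  have hsin := (hp.hasDerivAt t).sin
  obtain ⟨hw', hv'⟩ := hw t
  refine (((hcos.const_add (E + 1 - 4 * κ)).mul (hv'.pow 2)).add
    (((hsin.mul (hp.hasDerivAt_deriv t)).mul hw').mul hv') |>.add
    ((((hcos.const_add (2 * κ)).mul (hcos.const_add (E + 1 - 4 * κ))).add
      (((hsin.pow 2).sub ((hcos.const_mul 2).mul (hcos.const_add (E + 1)))).div_const 2)).mul
        (hw'.pow 2))).congr_deriv ?_
  simp only [Pi.mul_apply, Pi.pow_apply, Pi.add_apply, Pi.sub_apply]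
  linear_combination 2 * cos (p t) * w t * v t * hp.energy t

theorem preservesDiagForm_monodromy (hp : IsPendulumSolution E p) (h0 : p 0 = 0)
    (hT : p T = 2 * π) (hX : ∀ t, HasDerivAt X (!![0, 1; -(2 * κ + cos (p t)), 0] * X t) t)
    (hX0 : X 0 = 1) :
    (X T).PreservesDiagForm (2 * κ * (E - 4 * κ)) (E + 2 - 4 * κ) := by
  intro x y
  have hw := ((isHillSolution_column (q := fun t => 2 * κ + cos (p t)) hX 0).mul_const x).add
    ((isHillSolution_column (q := fun t => 2 * κ + cos (p t)) hX 1).mul_const y)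
  have hB := hp.hasDerivAt_linearizationInvariant hw
  have hconst := is_const_of_deriv_eq_zero (fun t => (hB t).differentiableAt)
    (fun t => (hB t).deriv) T 0
  beta_reduce at hconst
  rw [linearizationInvariant_of_cos_eq_one (by rw [hT, cos_two_pi]),
    linearizationInvariant_of_cos_eq_one (by rw [h0, cos_zero])] at hconst
  simpa [hX0] using hconst

theorem linearization_ne_zero_at_two_pi (hp : IsPendulumSolution E p) (hmono : StrictMono p)
    (hκ : 4 * κ < E + 2) (hw : IsHillSolution (fun t => 2 * κ + cos (p t)) w v) {a b : ℝ}
    (ha : p a = 0) (hb : p b = 2 * π) (hwa : w a = 0) (hva : v a ≠ 0) : w b ≠ 0 := by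
  intro hwb
  have hab : a < b := hmono.lt_iff_lt.1 (by rw [ha, hb]; positivity)
  obtain ⟨σ, hσ, hsin⟩ := hw.sturm_comparison hp.isHillSolution_sin_half hab
    (fun t _ => by linarith) hwa hva hwb
  have h₁ : 0 < p σ := ha ▸ hmono hσ.1
  have h₂ : p σ < 2 * π := hb ▸ hmono hσ.2
  exact (sin_pos_of_pos_of_lt_pi (by linarith) (by linarith)).ne' hsin

/-- Sturm comparison twice: `cos (p / 2)` vanishes at `a` and `b`, so `w` has a zero inside;
between any two zeros of `w` lies a zero of `sin (p / 2)`, and there is only one of those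
in `(a, b)`. -/
theorem linearization_ne_zero_at_three_pi (hp : IsPendulumSolution E p) (hmono : StrictMono p)
    (hE : 0 < E) (hκ : 4 * κ - 2 < E ∧ E < 4 * κ)
    (hw : IsHillSolution (fun t => 2 * κ + cos (p t)) w v)
    (hnt : ∀ t, w t = 0 → v t ≠ 0) {a b : ℝ} (ha : p a = π) (hb : p b = 3 * π)
    (hwa : w a = 0) : w b ≠ 0 := by
  intro hwb
  have hab : a < b := hmono.lt_iff_lt.1 (by rw [ha, hb]; linarith [pi_pos])
  have hda : deriv p a ≠ 0 := fun h => by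
    have := hp.energy a
    rw [ha, cos_pi, h] at this
    linarith
  obtain ⟨z, hz, hwz⟩ := hp.isHillSolution_cos_half.sturm_comparison hw hab
    (fun t _ => by linarith) (by rw [ha]; simp) (by simpa [ha] using hda)
    (by rw [hb, show 3 * π / 2 = π / 2 + π by ring, cos_add_pi, cos_pi_div_two, neg_zero])
  have hsin_zero {c d : ℝ} (hac : a ≤ c) (hcd : c < d) (hdb : d ≤ b) (hwc : w c = 0)
      (hwd : w d = 0) : ∃ σ ∈ Ioo c d, p σ = 2 * π := by
    obtain ⟨σ, hσ, hsin⟩ := hw.sturm_comparison hp.isHillSolution_sin_half hcd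
      (fun t _ => by linarith) hwc (hnt c hwc) hwd
    refine ⟨σ, hσ, eq_two_pi_of_sin_half_eq_zero ?_ ?_ hsin⟩
    · exact ha ▸ hmono (hac.trans_lt hσ.1)
    · exact hb ▸ hmono (hσ.2.trans_le hdb)
  obtain ⟨σ₁, hσ₁, hp₁⟩ := hsin_zero le_rfl hz.1 hz.2.le hwa hwz
  obtain ⟨σ₂, hσ₂, hp₂⟩ := hsin_zero hz.1.le hz.2 le_rfl hwz hwb
  exact (hσ₁.2.trans hσ₂.1).ne (hmono.injective (hp₁.trans hp₂.symm))

theorem monodromy_ne_one (hp : IsPendulumSolution E p) (hmono : StrictMono p)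
    (hκ : 4 * κ < E + 2) (h0 : p 0 = 0) (hT : p T = 2 * π)
    (hX : ∀ t, HasDerivAt X (!![0, 1; -(2 * κ + cos (p t)), 0] * X t) t) (hX0 : X 0 = 1) :
    X T ≠ 1 := fun hXT =>
  hp.linearization_ne_zero_at_two_pi hmono hκ (isHillSolution_column hX 1) h0 hT
    (by simp [hX0]) (by simp [hX0]) (by simp [hXT])

/-- The solution with Cauchy data `(0, 1)` at a time `τ` where `p τ = π` is `T`-antiperiodic
when `X T = -1`, so it also vanishes at `τ + T`, where `p = 3π`. -/
theorem monodromy_ne_neg_one (hp : IsPendulumSolution E p) (hmono : StrictMono p) (hE : 0 < E)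
    (hκ : 4 * κ - 2 < E ∧ E < 4 * κ) (h0 : p 0 = 0) (hper : ∀ t, p (t + T) = p t + 2 * π)
    (hX : ∀ t, HasDerivAt X (!![0, 1; -(2 * κ + cos (p t)), 0] * X t) t) (hX0 : X 0 = 1) :
    X T ≠ -1 := by
  intro hXT
  have hpT : p T = 2 * π := by simpa [h0] using hper 0
  have hT : 0 < T := hmono.lt_iff_lt.1 (by rw [h0, hpT]; positivity)
  obtain ⟨τ, -, hτ⟩ := intermediate_value_Icc hT.le
    (continuous_iff_continuousAt.2 fun t => (hp.hasDerivAt t).continuousAt).continuousOn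
    (show π ∈ Icc (p 0) (p T) by rw [h0, hpT]; constructor <;> linarith [pi_pos])
  have hcol := isHillSolution_column (q := fun t => 2 * κ + cos (p t)) hX
  have hw := ((hcol 0).mul_const (-X τ 0 1)).add ((hcol 1).mul_const (X τ 0 0))
  have hvτ : X τ 1 0 * -X τ 0 1 + X τ 1 1 * X τ 0 0 = 1 := by
    have := det_fundamental_eq_one hX hX0 τ
    rw [Matrix.det_fin_two] at this
    linear_combination this
  have hnt : ∀ t, X t 0 0 * -X τ 0 1 + X t 0 1 * X τ 0 0 = 0 →
      X t 1 0 * -X τ 0 1 + X t 1 1 * X τ 0 0 ≠ 0 := fun t hwt hvt => by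
    have hW : X 0 0 0 * X 0 1 1 - X 0 1 0 * X 0 0 1 ≠ 0 := by simp [hX0]
    have := ((hcol 0).eq_zero_of_initial_eq_zero (hcol 1) hW hw hwt hvt τ).2
    rw [hvτ] at this
    exact one_ne_zero this
  have hshift := fundamental_add_period (q := fun t => 2 * κ + cos (p t)) (T := T) hX hX0
    (fun t => by simp only [hper, cos_add_two_pi]) τ
  rw [hXT, mul_neg, mul_one] at hshift
  refine hp.linearization_ne_zero_at_three_pi hmono hE hκ hw hnt hτ
    (by rw [hper, hτ]; ring) (by ring) ?_
  simp only [hshift, Matrix.neg_apply]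
  ring

end IsPendulumSolution

theorem stmt_5_general (κ : ℝ) (hκ : 0 < κ) (E : ℝ) (hE : 0 < E)
    (T : ℝ)
    (p : ℝ → ℝ)
    (hp_init : p 0 = 0) (hp_init' : 0 < deriv p 0)
    (hp_diff : ∀ t, DifferentiableAt ℝ p t)
    (hp_ode : ∀ t, HasDerivAt (deriv p) (-Real.sin (p t)) t)
    (hp_energy : ∀ t, (deriv p t) ^ 2 / 2 = E + 1 + Real.cos (p t))
    (hp_per : ∀ t, p (t + T) = p t + 2 * π)
    (X : ℝ → Matrix (Fin 2) (Fin 2) ℝ)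
    (hX0 : X 0 = 1)
    (hX : ∀ t, HasDerivAt X
      ((!![0, 1; -(2 * κ + Real.cos (p t)), 0] : Matrix (Fin 2) (Fin 2) ℝ) * X t) t) :
    (2 < |Matrix.trace (X T)| ↔ 4 * κ - 2 < E ∧ E < 4 * κ) ∧
      (¬(4 * κ - 2 < E ∧ E < 4 * κ) → |Matrix.trace (X T)| ≤ 2) := by
  have hp : IsPendulumSolution E p := ⟨hp_diff, hp_ode, hp_energy⟩
  have hmono := hp.strictMono hE hp_init'
  have hpT : p T = 2 * π := by simpa [hp_init] using hp_per 0
  have hdet := det_fundamental_eq_one hX hX0 T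
  have hform := hp.preservesDiagForm_monodromy hp_init hpT hX hX0
  have hstable : ¬(4 * κ - 2 < E ∧ E < 4 * κ) → |(X T).trace| ≤ 2 := by
    intro h
    rcases le_or_gt (4 * κ) E with hE₁ | hE₁
    · have hc₁ : 0 ≤ 2 * κ * (E - 4 * κ) := mul_nonneg (by positivity) (by linarith)
      have hc₂ : 0 < E + 2 - 4 * κ := by linarith
      exact hform.abs_trace_le_two hdet (mul_nonneg hc₁ hc₂.le) (Or.inr hc₂.ne')
    · have hE₂ : E ≤ 4 * κ - 2 := not_lt.1 fun h' => h ⟨h', hE₁⟩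
      have hc₁ : 2 * κ * (E - 4 * κ) < 0 := mul_neg_of_pos_of_neg (by positivity) (by linarith)
      have hc₂ : E + 2 - 4 * κ ≤ 0 := by linarith
      exact hform.abs_trace_le_two hdet (mul_nonneg_of_nonpos_of_nonpos hc₁.le hc₂)
        (Or.inl hc₁.ne)
  have hunstable : 4 * κ - 2 < E ∧ E < 4 * κ → 2 < |(X T).trace| := by
    intro h
    have hc₁ : 2 * κ * (E - 4 * κ) < 0 := mul_neg_of_pos_of_neg (by positivity) (by linarith)
    rcases hform.two_lt_abs_trace_or hdet (mul_neg_of_neg_of_pos hc₁ (by linarith))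
      with htr | hone | hneg
    · exact htr
    · exact absurd hone (hp.monodromy_ne_one hmono (by linarith) hp_init hpT hX hX0)
    · exact absurd hneg (hp.monodromy_ne_neg_one hmono hE h hp_init hp_per hX hX0)
  exact ⟨⟨fun h => not_not.1 fun h' => (hstable h').not_gt h, hunstable⟩, hstable⟩

/-- collapse of instability intervals for the sinusoidal potential: for
the coupled pendula with coupling `κ > 0` and synchronous solution `p` of energy
surplus `E > 0` (`p'' + sin p = 0`, `(p')²/2 = E + 1 + cos p`), the Floquet matrix
`F_E = X(T(E))` of the linearization `w'' + (2κ + cos p)w = 0` satisfies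
`|tr F_E| > 2` (linear instability) if and only if `4κ − 2 < E < 4κ`; for all other
`E > 0` its eigenvalues lie on the unit circle, i.e. `|tr F_E| ≤ 2`. -/
theorem stmt_5 (κ : ℝ) (hκ : 0 < κ) (E : ℝ) (hE : 0 < E)
    (T : ℝ)
    (hT : T = (1 / Real.sqrt 2) * ∫ x in (-π)..π, 1 / Real.sqrt (E + 1 + Real.cos x))
    (p : ℝ → ℝ)
    (hp_init : p 0 = 0) (hp_init' : 0 < deriv p 0)
    (hp_diff : ∀ t, DifferentiableAt ℝ p t)
    (hp_ode : ∀ t, HasDerivAt (deriv p) (-Real.sin (p t)) t)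
    (hp_energy : ∀ t, (deriv p t) ^ 2 / 2 = E + 1 + Real.cos (p t))
    (hp_per : ∀ t, p (t + T) = p t + 2 * π)
    (X : ℝ → Matrix (Fin 2) (Fin 2) ℝ)
    (hX0 : X 0 = 1)
    (hX : ∀ t, HasDerivAt X
      ((!![0, 1; -(2 * κ + Real.cos (p t)), 0] : Matrix (Fin 2) (Fin 2) ℝ) * X t) t) :
    (2 < |Matrix.trace (X T)| ↔ 4 * κ - 2 < E ∧ E < 4 * κ) ∧
      (¬(4 * κ - 2 < E ∧ E < 4 * κ) → |Matrix.trace (X T)| ≤ 2) :=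
  stmt_5_general κ hκ E hE T p hp_init hp_init' hp_diff hp_ode hp_energy hp_per X hX0 hX
end

section
/- Let G : ℝ → Matrix(2,2,ℝ) be continuous and suppose there exist c > 0 and λ > 0 such that ‖G(t)‖ ≤ c·e^{−λ|t|} for all t ∈ ℝ. Let C : ℝ → Matrix(2,2,ℝ) be a fundamental solution matrix of the linear system C'(t) = G(t)·C(t), with C(t) invertible for every t. Then there exist a constant matrix N and a constant b > 0, depending only on G, such that ‖C(t)·C(−t)⁻¹ − N‖ ≤ b·e^{−λt} for all t > 0; in other words, the time-advance map from −t to t converges to N exponentially as t → ∞. -/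
/-!
Write `D(t) = C(-t)⁻¹`, so that `C(t) C(-t)⁻¹ = C(t) D(t)` with `C' = G(t) C` and `D' = D G(-t)`.
For `t ≥ 0` both equations have coefficients of size at most `c e^{-λt}`, which is integrable on
`[0, ∞)`; a Gronwall barrier bounds the solutions, hence their derivatives are `O(e^{-λt})`, so each
converges to its limit at rate `e^{-λt}`, and so does the product.
-/

attribute [local instance] Matrix.frobeniusNormedAddCommGroup Matrix.frobeniusNormedSpace
  Matrix.frobeniusNormedRing

open Real Filter Topology

section Decay

variable {E : Type*} [NormedAddCommGroup E]

def ExpConvergesTo (lam : ℝ) (f : ℝ → E) (L : E) : Prop :=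
  ∃ K, 0 < K ∧ ∀ t, 0 ≤ t → ‖f t - L‖ ≤ K * exp (-lam * t)

theorem exists_norm_sub_le_of_norm_sub_le_exp [CompleteSpace E] {f : ℝ → E} {A lam : ℝ}
    (hlam : 0 < lam) (hf : ∀ s t, 0 ≤ s → s ≤ t → ‖f t - f s‖ ≤ A * exp (-lam * s)) :
    ∃ L, ∀ t, 0 ≤ t → ‖f t - L‖ ≤ A * exp (-lam * t) := by
  have hdecay : Tendsto (fun n : ℕ => A * exp (-lam * n)) atTop (𝓝 0) := by
    simpa using (tendsto_exp_atBot.comp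
      (tendsto_natCast_atTop_atTop.const_mul_atTop_of_neg (neg_lt_zero.2 hlam))).const_mul A
  have hcauchy : CauchySeq fun n : ℕ => f n :=
    cauchySeq_of_le_tendsto_0' _ (fun m n hmn => by
      rw [dist_comm, dist_eq_norm]
      exact hf m n m.cast_nonneg (Nat.cast_le.2 hmn)) hdecay
  obtain ⟨L, hL⟩ := cauchySeq_tendsto_of_complete hcauchy
  refine ⟨L, fun t ht => le_of_tendsto (((tendsto_const_nhds.sub hL).norm)) ?_⟩
  filter_upwards [eventually_ge_atTop ⌈t⌉₊] with n hn
  rw [norm_sub_rev]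
  exact hf t n ht ((Nat.le_ceil t).trans (Nat.cast_le.2 hn))

variable [NormedSpace ℝ E]

theorem norm_le_of_norm_deriv_le_exp_mul_norm {f f' : ℝ → E} {c lam : ℝ} (hc : 0 ≤ c)
    (hlam : 0 < lam) (hf : ∀ t, 0 ≤ t → HasDerivAt f (f' t) t)
    (hf' : ∀ t, 0 ≤ t → ‖f' t‖ ≤ c * exp (-lam * t) * ‖f t‖) {t : ℝ} (ht : 0 ≤ t) :
    ‖f t‖ ≤ (‖f 0‖ + 1) * exp ((c + 1) / lam) := by
  set k := (c + 1) / lam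
  set A := (‖f 0‖ + 1) * exp k
  set B : ℝ → ℝ := fun x => A * exp (-(k * exp (-lam * x)))
  have hB_pos : ∀ x, 0 < B x := fun x => by positivity
  have hB : ∀ x, HasDerivAt B ((c + 1) * exp (-lam * x) * B x) x := by
    intro x
    have hexp : HasDerivAt (fun x => exp (-lam * x)) (exp (-lam * x) * -lam) x :=
      ((hasDerivAt_id x).const_mul (-lam)).exp.congr_deriv (by simp)
    refine ((hexp.const_mul k).neg.exp.const_mul A).congr_deriv ?_
    simp only [B, k, Pi.neg_apply]
    field_simp
  have hbarrier := image_norm_le_of_norm_deriv_right_lt_deriv_boundary (a := 0) (b := t)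
    (fun x hx => (hf x hx.1).continuousAt.continuousWithinAt)
    (fun x hx => (hf x hx.1).hasDerivWithinAt) (by
      show ‖f 0‖ ≤ A * exp (-(k * exp (-lam * 0)))
      rw [mul_zero, exp_zero, mul_one, mul_assoc, ← exp_add, add_neg_cancel, exp_zero, mul_one]
      linarith) hB
    (fun x hx hfx => by
      calc ‖f' x‖ ≤ c * exp (-lam * x) * B x := hfx ▸ hf' x hx.1
        _ < (c + 1) * exp (-lam * x) * B x := by gcongr; linarith)
  calc ‖f t‖ ≤ B t := hbarrier ⟨ht, le_rfl⟩
    _ ≤ A := mul_le_of_le_one_right (by positivity) (exp_le_one_iff.2 (by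
        have : 0 ≤ k := by positivity
        have := exp_pos (-lam * t)
        nlinarith))

theorem norm_sub_le_of_norm_deriv_le_exp {f f' : ℝ → E} {K lam s t : ℝ} (hlam : 0 < lam)
    (hf : ∀ x, 0 ≤ x → HasDerivAt f (f' x) x) (hf' : ∀ x, 0 ≤ x → ‖f' x‖ ≤ K * exp (-lam * x))
    (hs : 0 ≤ s) (hst : s ≤ t) :
    ‖f t - f s‖ ≤ K / lam * exp (-lam * s) := by
  have hK : 0 ≤ K := nonneg_of_mul_nonneg_left ((norm_nonneg _).trans (hf' s hs)) (exp_pos _)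
  set B : ℝ → ℝ := fun x => K / lam * (exp (-lam * s) - exp (-lam * x))
  have hB : ∀ x, HasDerivAt B (K * exp (-lam * x)) x := by
    intro x
    have hexp : HasDerivAt (fun x => exp (-lam * x)) (exp (-lam * x) * -lam) x :=
      ((hasDerivAt_id x).const_mul (-lam)).exp.congr_deriv (by simp)
    refine (((hasDerivAt_const x _).sub hexp).const_mul (K / lam)).congr_deriv ?_
    field_simp
    ring
  have hbarrier := image_norm_le_of_norm_deriv_right_le_deriv_boundary (a := s) (b := t)
    (f := fun x => f x - f s)
    (fun x hx => ((hf x (hs.trans hx.1)).sub_const _).continuousAt.continuousWithinAt)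
    (fun x hx => ((hf x (hs.trans hx.1)).sub_const _).hasDerivWithinAt) (by simp [B]) hB
    (fun x hx => hf' x (hs.trans hx.1))
  calc ‖f t - f s‖ ≤ B t := hbarrier ⟨hst, le_rfl⟩
    _ ≤ K / lam * exp (-lam * s) := by
      have := exp_pos (-lam * t)
      have : 0 ≤ K / lam := by positivity
      simp only [B]
      nlinarith

theorem exists_expConvergesTo_of_norm_deriv_le [CompleteSpace E] {f f' : ℝ → E} {c lam : ℝ}
    (hc : 0 ≤ c) (hlam : 0 < lam) (hf : ∀ t, 0 ≤ t → HasDerivAt f (f' t) t)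
    (hf' : ∀ t, 0 ≤ t → ‖f' t‖ ≤ c * exp (-lam * t) * ‖f t‖) :
    ∃ L, ExpConvergesTo lam f L := by
  set M := (‖f 0‖ + 1) * exp ((c + 1) / lam)
  have hf'M : ∀ t, 0 ≤ t → ‖f' t‖ ≤ c * M * exp (-lam * t) := fun t ht =>
    calc ‖f' t‖ ≤ c * exp (-lam * t) * ‖f t‖ := hf' t ht
      _ ≤ c * exp (-lam * t) * M := by
        gcongr; exact norm_le_of_norm_deriv_le_exp_mul_norm hc hlam hf hf' ht
      _ = c * M * exp (-lam * t) := by ring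
  obtain ⟨L, hL⟩ := exists_norm_sub_le_of_norm_sub_le_exp hlam
    fun s t hs hst => norm_sub_le_of_norm_deriv_le_exp hlam hf hf'M hs hst
  refine ⟨L, c * M / lam + 1, by positivity, fun t ht => (hL t ht).trans ?_⟩
  gcongr
  linarith

end Decay

section Ring

variable {R : Type*} [NormedRing R]

theorem ExpConvergesTo.mul {lam : ℝ} (hlam : 0 ≤ lam) {a b : ℝ → R} {A B : R}
    (ha : ExpConvergesTo lam a A) (hb : ExpConvergesTo lam b B) :
    ExpConvergesTo lam (a * b) (A * B) := by
  obtain ⟨K₁, hK₁, ha⟩ := ha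
  obtain ⟨K₂, hK₂, hb⟩ := hb
  refine ⟨K₁ * (‖B‖ + K₂) + ‖A‖ * K₂ + 1, by positivity, fun t ht => ?_⟩
  have hexp : exp (-lam * t) ≤ 1 := exp_le_one_iff.2 (by nlinarith)
  have hb_bdd : ‖b t‖ ≤ ‖B‖ + K₂ :=
    calc ‖b t‖ ≤ ‖B‖ + ‖b t - B‖ := norm_le_insert' _ _
      _ ≤ ‖B‖ + K₂ := by gcongr; exact (hb t ht).trans (mul_le_of_le_one_right hK₂.le hexp)
  calc ‖a t * b t - A * B‖ = ‖(a t - A) * b t + A * (b t - B)‖ := by noncomm_ring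
    _ ≤ ‖a t - A‖ * ‖b t‖ + ‖A‖ * ‖b t - B‖ :=
      (norm_add_le _ _).trans (add_le_add (norm_mul_le _ _) (norm_mul_le _ _))
    _ ≤ K₁ * exp (-lam * t) * (‖B‖ + K₂) + ‖A‖ * (K₂ * exp (-lam * t)) := by
      gcongr
      exacts [ha t ht, hb t ht]
    _ ≤ (K₁ * (‖B‖ + K₂) + ‖A‖ * K₂ + 1) * exp (-lam * t) := by
      nlinarith [exp_pos (-lam * t)]

variable [HasSummableGeomSeries R] [NormedAlgebra ℝ R]

theorem HasDerivAt.ringInverse {f : ℝ → R} {f' : R} {t : ℝ} (hf : HasDerivAt f f' t)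
    (ht : IsUnit (f t)) :
    HasDerivAt (fun s => Ring.inverse (f s))
      (-(Ring.inverse (f t) * f' * Ring.inverse (f t))) t := by
  obtain ⟨u, hu⟩ := ht
  have hinv := hasFDerivAt_ringInverse (𝕜 := ℝ) u
  rw [hu] at hinv
  have h := hinv.comp_hasDerivAt t hf
  simp only [neg_apply, ContinuousLinearMap.mulLeftRight_apply] at h
  rw [← hu, Ring.inverse_unit]
  exact h

theorem hasDerivAt_ringInverse_comp_neg {g f : ℝ → R} (hf : ∀ t, HasDerivAt f (g t * f t) t)
    (hf_unit : ∀ t, IsUnit (f t)) (t : ℝ) :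
    HasDerivAt (fun s => Ring.inverse (f (-s))) (Ring.inverse (f (-t)) * g (-t)) t := by
  refine (((hf (-t)).ringInverse (hf_unit (-t))).scomp t (hasDerivAt_neg t)).congr_deriv ?_
  simp [mul_assoc, Ring.mul_inverse_cancel _ (hf_unit (-t))]

end Ring

attribute [local instance] Matrix.frobeniusNormedAlgebra

theorem stmt_7_general (c lam : ℝ) (hc : 0 < c) (hlam : 0 < lam)
    (G : ℝ → Matrix (Fin 2) (Fin 2) ℝ)
    (hG : ∀ t : ℝ, ‖G t‖ ≤ c * Real.exp (-lam * |t|))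
    (C : ℝ → Matrix (Fin 2) (Fin 2) ℝ)
    (hC : ∀ t : ℝ, HasDerivAt C (G t * C t) t)
    (hC_inv : ∀ t : ℝ, IsUnit (C t)) :
    ∃ (N : Matrix (Fin 2) (Fin 2) ℝ) (b : ℝ), 0 < b ∧
      ∀ t : ℝ, 0 < t → ‖C t * (C (-t))⁻¹ - N‖ ≤ b * Real.exp (-lam * t) := by
  have hG_fwd : ∀ t, 0 ≤ t → ‖G t‖ ≤ c * exp (-lam * t) := fun t ht => by
    simpa [abs_of_nonneg ht] using hG t
  have hG_bwd : ∀ t, 0 ≤ t → ‖G (-t)‖ ≤ c * exp (-lam * t) := fun t ht => by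
    simpa [abs_of_nonneg ht] using hG (-t)
  obtain ⟨N₁, hN₁⟩ := exists_expConvergesTo_of_norm_deriv_le hc.le hlam (fun t _ => hC t)
    fun t ht => (norm_mul_le _ _).trans (by gcongr; exact hG_fwd t ht)
  obtain ⟨N₂, hN₂⟩ := exists_expConvergesTo_of_norm_deriv_le hc.le hlam
    (fun t _ => hasDerivAt_ringInverse_comp_neg hC hC_inv t)
    fun t ht => (norm_mul_le _ _).trans (by rw [mul_comm]; gcongr; exact hG_bwd t ht)
  obtain ⟨b, hb, hbound⟩ := hN₁.mul hlam.le hN₂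
  refine ⟨N₁ * N₂, b, hb, fun t ht => ?_⟩
  simpa [Matrix.nonsing_inv_eq_ringInverse] using hbound t ht.le

/-- "exponential death": if the coefficient matrix `G` of `C' = G(t)C`
decays exponentially in both time directions, `‖G(t)‖ ≤ c·e^{−λ|t|}`, and `C` is a
fundamental solution matrix (invertible for every `t`), then there exist a constant
matrix `N` and a constant `b > 0` such that
`‖C(t)·C(−t)⁻¹ − N‖ ≤ b·e^{−λt}` for all `t > 0`. -/
theorem stmt_7 (c lam : ℝ) (hc : 0 < c) (hlam : 0 < lam)
    (G : ℝ → Matrix (Fin 2) (Fin 2) ℝ) (hG_cont : Continuous G)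
    (hG : ∀ t : ℝ, ‖G t‖ ≤ c * Real.exp (-lam * |t|))
    (C : ℝ → Matrix (Fin 2) (Fin 2) ℝ)
    (hC : ∀ t : ℝ, HasDerivAt C (G t * C t) t)
    (hC_inv : ∀ t : ℝ, IsUnit (C t)) :
    ∃ (N : Matrix (Fin 2) (Fin 2) ℝ) (b : ℝ), 0 < b ∧
      ∀ t : ℝ, 0 < t → ‖C t * (C (-t))⁻¹ - N‖ ≤ b * Real.exp (-lam * t) :=
  stmt_7_general c lam hc hlam G hG C hC hC_inv
end

section
/- Let κ > 0, T > 0, let B = [[0, 1], [−2κ, 0]], and let M = I + T·B + R be a 2×2 real matrix with ‖R‖ < T·min(1, 2κ), where ‖·‖ is the operator norm induced by the Euclidean norm. Then for every nonzero u = (u₁, u₂) ∈ ℝ², (M·u)·u^⊥ ≠ 0 where u^⊥ = (−u₂, u₁); consequently M has no real eigenvector and no real eigenvalue, and in particular |tr M| < 2 when det M = 1. -/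
open scoped Matrix.Norms.L2Operator
open Matrix

/-! With `u^⊥ = (-u₂, u₁)`, the identity contributes nothing to `(Mu)·u^⊥`, the term `T·B`
contributes `-T(u₂² + 2κu₁²) ≤ -T·min(1, 2κ)|u|²`, and the perturbation at most `‖R‖|u|²`
by Cauchy–Schwarz, so `(Mu)·u^⊥ < 0` for `u ≠ 0`. An eigenvector would make this product
vanish, while a real `2 × 2` matrix with `det = 1` and `|tr| ≥ 2` has the real eigenvalue
`(tr + √(tr² - 4))/2`. -/

theorem Matrix.abs_mulVec_dotProduct_le {n : Type*} [Fintype n] [DecidableEq n]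
    (A : Matrix n n ℝ) (u w : n → ℝ) :
    |A *ᵥ u ⬝ᵥ w| ≤ ‖A‖ * ‖WithLp.toLp 2 u‖ * ‖WithLp.toLp 2 w‖ := by
  calc |A *ᵥ u ⬝ᵥ w| = |inner ℝ (WithLp.toLp 2 w) (WithLp.toLp 2 (A *ᵥ u))| := by
        rw [EuclideanSpace.inner_toLp_toLp]; rfl
    _ ≤ ‖WithLp.toLp 2 w‖ * ‖WithLp.toLp 2 (A *ᵥ u)‖ := abs_real_inner_le_norm _ _
    _ ≤ ‖WithLp.toLp 2 w‖ * (‖A‖ * ‖WithLp.toLp 2 u‖) :=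
        mul_le_mul_of_nonneg_left (A.l2_opNorm_mulVec _) (norm_nonneg _)
    _ = ‖A‖ * ‖WithLp.toLp 2 u‖ * ‖WithLp.toLp 2 w‖ := by ring

theorem Matrix.exists_mulVec_eq_smul_of_four_mul_det_le_trace_sq {M : Matrix (Fin 2) (Fin 2) ℝ}
    (h : 4 * M.det ≤ M.trace ^ 2) :
    ∃ (r : ℝ) (v : Fin 2 → ℝ), v ≠ 0 ∧ M *ᵥ v = r • v := by
  obtain ⟨r, hr⟩ : ∃ r : ℝ, 1 * (r * r) + -M.trace * r + M.det = 0 := by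
    refine exists_quadratic_eq_zero one_ne_zero ⟨√(M.trace ^ 2 - 4 * M.det), ?_⟩
    rw [discrim, Real.mul_self_sqrt (by linarith)]
    ring
  have hdet : (M - r • 1).det = 0 := by
    rw [det_fin_two, trace_fin_two] at *
    simp only [sub_apply, smul_apply, one_apply_eq, one_apply_ne zero_ne_one,
      one_apply_ne one_ne_zero, smul_eq_mul]
    linear_combination hr
  obtain ⟨v, hv, hMv⟩ := exists_mulVec_eq_zero_iff.mpr hdet
  refine ⟨r, v, hv, ?_⟩
  rwa [sub_mulVec, smul_mulVec, one_mulVec, sub_eq_zero] at hMv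

def perp (u : Fin 2 → ℝ) : Fin 2 → ℝ := ![-u 1, u 0]

theorem dotProduct_perp_self (u : Fin 2 → ℝ) : u ⬝ᵥ perp u = 0 := by
  simp [perp, dotProduct, Fin.sum_univ_two]; ring

theorem norm_toLp_sq_fin_two (u : Fin 2 → ℝ) :
    ‖WithLp.toLp 2 u‖ ^ 2 = u 0 ^ 2 + u 1 ^ 2 := by
  simp [EuclideanSpace.real_norm_sq_eq, Fin.sum_univ_two]

theorem norm_toLp_perp (u : Fin 2 → ℝ) :
    ‖WithLp.toLp 2 (perp u)‖ = ‖WithLp.toLp 2 u‖ := by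
  rw [← sq_eq_sq₀ (norm_nonneg _) (norm_nonneg _), norm_toLp_sq_fin_two, norm_toLp_sq_fin_two]
  simp [perp]; ring

theorem mulVec_dotProduct_perp (κ : ℝ) (u : Fin 2 → ℝ) :
    !![0, 1; -(2 * κ), 0] *ᵥ u ⬝ᵥ perp u = -(u 1 ^ 2 + 2 * κ * u 0 ^ 2) := by
  simp [perp, dotProduct, Fin.sum_univ_two, mulVec]; ring

theorem mulVec_dotProduct_perp_lt_zero {κ T : ℝ} (hT : 0 ≤ T) {R : Matrix (Fin 2) (Fin 2) ℝ}
    (hR : ‖R‖ < T * min 1 (2 * κ)) {u : Fin 2 → ℝ} (hu : u ≠ 0) :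
    (1 + T • !![0, 1; -(2 * κ), 0] + R) *ᵥ u ⬝ᵥ perp u < 0 := by
  have hpos : 0 < ‖WithLp.toLp 2 u‖ := by simpa using hu
  have hRu : R *ᵥ u ⬝ᵥ perp u ≤ ‖R‖ * ‖WithLp.toLp 2 u‖ ^ 2 := by
    have := (le_abs_self _).trans (R.abs_mulVec_dotProduct_le u (perp u))
    rwa [norm_toLp_perp, mul_assoc, ← sq] at this
  have hmin : 0 ≤ T * ((2 * κ - min 1 (2 * κ)) * u 0 ^ 2 + (1 - min 1 (2 * κ)) * u 1 ^ 2) :=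
    mul_nonneg hT <| add_nonneg
      (mul_nonneg (sub_nonneg.2 (min_le_right _ _)) (sq_nonneg _))
      (mul_nonneg (sub_nonneg.2 (min_le_left _ _)) (sq_nonneg _))
  calc (1 + T • !![0, 1; -(2 * κ), 0] + R) *ᵥ u ⬝ᵥ perp u
      = -T * (u 1 ^ 2 + 2 * κ * u 0 ^ 2) + R *ᵥ u ⬝ᵥ perp u := by
        rw [add_mulVec, add_mulVec, add_dotProduct, add_dotProduct, one_mulVec,
          dotProduct_perp_self, smul_mulVec, smul_dotProduct, mulVec_dotProduct_perp, smul_eq_mul]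
        ring
    _ ≤ -T * (u 1 ^ 2 + 2 * κ * u 0 ^ 2) + ‖R‖ * ‖WithLp.toLp 2 u‖ ^ 2 := by gcongr
    _ < -T * (u 1 ^ 2 + 2 * κ * u 0 ^ 2) + T * min 1 (2 * κ) * ‖WithLp.toLp 2 u‖ ^ 2 := by
        gcongr
    _ ≤ 0 := by rw [norm_toLp_sq_fin_two]; linarith

theorem mulVec_ne_smul_of_mulVec_dotProduct_perp_ne_zero {M : Matrix (Fin 2) (Fin 2) ℝ}
    (h : ∀ u : Fin 2 → ℝ, u ≠ 0 → M *ᵥ u ⬝ᵥ perp u ≠ 0) (r : ℝ) (u : Fin 2 → ℝ)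
    (hu : u ≠ 0) :
    M *ᵥ u ≠ r • u := by
  intro hMu
  apply h u hu
  rw [hMu, smul_dotProduct, dotProduct_perp_self, smul_zero]

theorem stmt_19_general (κ T : ℝ) (hT : 0 < T)
    (R M : Matrix (Fin 2) (Fin 2) ℝ)
    (hM : M = 1 + T • (!![0, 1; -(2 * κ), 0] : Matrix (Fin 2) (Fin 2) ℝ) + R)
    (hR : ‖R‖ < T * min 1 (2 * κ)) :
    (∀ u : Fin 2 → ℝ, u ≠ 0 →
        dotProduct (M.mulVec u) ![-(u 1), u 0] ≠ 0) ∧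
      (∀ (r : ℝ) (u : Fin 2 → ℝ), u ≠ 0 → M.mulVec u ≠ r • u) ∧
      (M.det = 1 → |M.trace| < 2) := by
  have hperp : ∀ u : Fin 2 → ℝ, u ≠ 0 → M *ᵥ u ⬝ᵥ perp u ≠ 0 := fun u hu =>
    hM ▸ (mulVec_dotProduct_perp_lt_zero hT.le hR hu).ne
  have hno_eigen := mulVec_ne_smul_of_mulVec_dotProduct_perp_ne_zero hperp
  refine ⟨hperp, hno_eigen, fun hdet => ?_⟩
  by_contra! htr
  obtain ⟨r, v, hv, hMv⟩ := exists_mulVec_eq_smul_of_four_mul_det_le_trace_sq (M := M) (by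
    rw [hdet, ← sq_abs]; nlinarith)
  exact hno_eigen r v hv hMv

/-- if `M = I + T·B + R` with `B = [[0,1],[−2κ,0]]`, `κ, T > 0` and
`‖R‖ < T·min(1,2κ)` in the operator norm induced by the Euclidean norm, then
`(Mu)·u^⊥ ≠ 0` for every nonzero `u`, so `M` has no real eigenvector and no real
eigenvalue; in particular `|tr M| < 2` when `det M = 1`. -/
theorem stmt_19 (κ T : ℝ) (hκ : 0 < κ) (hT : 0 < T)
    (R M : Matrix (Fin 2) (Fin 2) ℝ)
    (hM : M = 1 + T • (!![0, 1; -(2 * κ), 0] : Matrix (Fin 2) (Fin 2) ℝ) + R)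
    (hR : ‖R‖ < T * min 1 (2 * κ)) :
    (∀ u : Fin 2 → ℝ, u ≠ 0 →
        dotProduct (M.mulVec u) ![-(u 1), u 0] ≠ 0) ∧
      (∀ (r : ℝ) (u : Fin 2 → ℝ), u ≠ 0 → M.mulVec u ≠ r • u) ∧
      (M.det = 1 → |M.trace| < 2) :=
  stmt_19_general κ T hT R M hM hR
end
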